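/- If L is a Latin square of order n with n ≥ 2, then 3n − 2 − ⌊log₂ n⌋ ≤ mcs(L) ≤ 3n − 3, where mcs(L) is the maximum length of a cover-sequence of L. -/

import Mathlib

open Finset

/-- An entry of a Latin square with rows/columns/symbols indexed by `X`. -/
abbrev Entry (X : Type*) := X × X × X

/-- A line of a Latin square: a tag (0 = row, 1 = column, 2 = symbol) and an index. -/
abbrev Line (X : Type*) := Fin 3 × X

/-- The entry `e` lies on the line `ℓ`. -/
def onLine {X : Type*} (e : Entry X) (ℓ : Line X) : Prop :=
  (ℓ.1 = 0 ∧ e.1 = ℓ.2) ∨ (ℓ.1 = 1 ∧ e.2.1 = ℓ.2) ∨ (ℓ.1 = 2 ∧ e.2.2 = ℓ.2)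

instance {X : Type*} [DecidableEq X] (e : Entry X) (ℓ : Line X) : Decidable (onLine e ℓ) := by
  unfold onLine; infer_instance

/-- `L` is a Latin square (on the full index set `X`). -/
def IsLatin {X : Type*} (L : Finset (Entry X)) : Prop :=
  (∀ r c : X, ∃! s : X, (r, c, s) ∈ L) ∧
  (∀ r s : X, ∃! c : X, (r, c, s) ∈ L) ∧
  (∀ c s : X, ∃! r : X, (r, c, s) ∈ L)

/-- Lazy-burning closure in the hypergraph `H_L`: vertices are the entries of `L`,
hyperedges are the lines of `L`; a vertex burns if it is the unique unburned vertex of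
a hyperedge of size at least 2. -/
inductive BurnedHL {X : Type*} [DecidableEq X] (L S : Finset (Entry X)) : Entry X → Prop
  | init {e : Entry X} : e ∈ S → BurnedHL L S e
  | prop {e : Entry X} (ℓ : Line X) : e ∈ L → onLine e ℓ →
      2 ≤ (L.filter (fun f => onLine f ℓ)).card →
      (∀ f ∈ L, onLine f ℓ → f ≠ e → BurnedHL L S f) → BurnedHL L S e

/-- `S` is a lazy burning set of the hypergraph `H_L`. -/
def IsLazyBurningSetHL {X : Type*} [DecidableEq X] (L S : Finset (Entry X)) : Prop :=
  S ⊆ L ∧ ∀ e ∈ L, BurnedHL L S e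

/-- The lazy burning number of `H_L`. -/
noncomputable def lbHL {X : Type*} [DecidableEq X] (L : Finset (Entry X)) : ℕ :=
  sInf {k | ∃ S : Finset (Entry X), IsLazyBurningSetHL L S ∧ S.card = k}

/-- A cover of `L`: a set of entries of `L` meeting every line. -/
def IsCover {X : Type*} (L C : Finset (Entry X)) : Prop :=
  C ⊆ L ∧ ∀ ℓ : Line X, ∃ e ∈ C, onLine e ℓ

/-- A weak cover-sequence of `L`: each entry lies on a line containing no earlier entry. -/
def IsWeakCoverSeq {X : Type*} (L : Finset (Entry X)) (es : List (Entry X)) : Prop :=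
  (∀ e ∈ es, e ∈ L) ∧
  ∀ i : Fin es.length, ∃ ℓ : Line X, onLine (es.get i) ℓ ∧
    ∀ j : Fin es.length, (j : ℕ) < (i : ℕ) → ¬ onLine (es.get j) ℓ

/-- A cover-sequence of `L`: a weak cover-sequence whose entries form a cover. -/
def IsCoverSeq {X : Type*} (L : Finset (Entry X)) (es : List (Entry X)) : Prop :=
  IsWeakCoverSeq L es ∧ ∀ ℓ : Line X, ∃ e ∈ es, onLine e ℓ

/-- `mcs L`: the maximum length of a cover-sequence of `L`. -/
noncomputable def mcs {X : Type*} (L : Finset (Entry X)) : ℕ :=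
  sSup {d | ∃ es : List (Entry X), IsCoverSeq L es ∧ es.length = d}

/-- `T` is a subsquare of `L`: `T = L ∩ (R × C × S)` with `|R| = |C| = |S|`, and `T`
is itself a Latin square on rows `R`, columns `C`, symbols `S`. -/
def IsSubsquare {X : Type*} [DecidableEq X] (L T : Finset (Entry X)) : Prop :=
  ∃ R C S : Finset X, R.card = C.card ∧ C.card = S.card ∧
    T = L.filter (fun e => e.1 ∈ R ∧ e.2.1 ∈ C ∧ e.2.2 ∈ S) ∧
    (∀ r ∈ R, ∀ c ∈ C, ∃! s, s ∈ S ∧ (r, c, s) ∈ T) ∧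
    (∀ r ∈ R, ∀ s ∈ S, ∃! c, c ∈ C ∧ (r, c, s) ∈ T) ∧
    (∀ c ∈ C, ∀ s ∈ S, ∃! r, r ∈ R ∧ (r, c, s) ∈ T)

/-- `Sq 0 ⊆ Sq 1 ⊆ ⋯ ⊆ Sq α` is a connected chain of subsquares of `L`, from the empty
subsquare through a single entry up to `L` itself. -/
def IsConnectedChain {X : Type*} [DecidableEq X] (L : Finset (Entry X)) (α : ℕ)
    (Sq : ℕ → Finset (Entry X)) : Prop :=
  1 ≤ α ∧ Sq 0 = ∅ ∧ (Sq 1).card = 1 ∧ Sq α = L ∧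
  (∀ i ≤ α, IsSubsquare L (Sq i)) ∧
  (∀ i < α, Sq i ⊆ Sq (i + 1)) ∧
  (∀ i, 1 ≤ i → i ≤ α → ∃ ℓ : Line X,
      (∃ e ∈ Sq i, onLine e ℓ) ∧ ¬(∃ e ∈ Sq (i - 1), onLine e ℓ) ∧
      (∀ T, IsSubsquare L T → Sq (i - 1) ⊆ T → (∃ e ∈ T, onLine e ℓ) → Sq i ⊆ T))

/-- `scc L`: the minimum length of a connected chain of subsquares of `L`. -/
noncomputable def scc {X : Type*} [DecidableEq X] (L : Finset (Entry X)) : ℕ :=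
  sInf {α | ∃ Sq : ℕ → Finset (Entry X), IsConnectedChain L α Sq}

/-- Lazy-burning closure in the 3-uniform hypergraph `H^L`: vertices are the lines of `L`,
and each entry of `L` induces the hyperedge consisting of its three lines. -/
inductive BurnedH3 {X : Type*} (L : Finset (Entry X)) (S : Finset (Line X)) : Line X → Prop
  | init {ℓ : Line X} : ℓ ∈ S → BurnedH3 L S ℓ
  | prop {ℓ : Line X} (e : Entry X) : e ∈ L → onLine e ℓ →
      (∀ ℓ' : Line X, onLine e ℓ' → ℓ' ≠ ℓ → BurnedH3 L S ℓ') → BurnedH3 L S ℓ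

/-- `S` is a lazy burning set of the 3-uniform hypergraph `H^L`. -/
def IsLazyBurningSetH3 {X : Type*} (L : Finset (Entry X)) (S : Finset (Line X)) : Prop :=
  ∀ ℓ : Line X, BurnedH3 L S ℓ

/-- The lazy burning number of `H^L`. -/
noncomputable def lbH3 {X : Type*} (L : Finset (Entry X)) : ℕ :=
  sInf {k | ∃ S : Finset (Line X), IsLazyBurningSetH3 L S ∧ S.card = k}

/-!
A sequence is tracked through the rows, columns and symbols it meets. Every entry of a
cover-sequence meets a new line, and the first two already meet five lines, since two distinct
entries of a Latin square share at most one line; so a cover-sequence of length `d` meets at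
least `d + 3` of the `3n` lines.

For the lower bound, extend greedily by entries with exactly one uncovered line. When no such
entry is left, the covered rows, columns and symbols have a common size `m`; adding the entry in
an uncovered row `r` and a covered column meets two new lines, and after the next greedy phase
the symbols in row `r` over the `m` old columns are all new, so `m` at least doubles. Hence at
most `log₂ n` entries meet two new lines and `3n ≤ d + 2 + log₂ n`.
-/

section WeakCoverSeq

variable {X : Type*} {L : Finset (Entry X)}

@[simp] lemma onLine_row (e : Entry X) (x : X) : onLine e (0, x) ↔ e.1 = x := by
  simp [onLine]

@[simp] lemma onLine_col (e : Entry X) (x : X) : onLine e (1, x) ↔ e.2.1 = x := by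
  simp [onLine]

@[simp] lemma onLine_sym (e : Entry X) (x : X) : onLine e (2, x) ↔ e.2.2 = x := by
  simp [onLine]

def MeetsNewLine (es : List (Entry X)) (e : Entry X) : Prop :=
  ∃ ℓ : Line X, onLine e ℓ ∧ ∀ f ∈ es, ¬ onLine f ℓ

lemma isWeakCoverSeq_nil : IsWeakCoverSeq L [] :=
  ⟨by simp, fun i => i.elim0⟩

lemma isWeakCoverSeq_append_singleton {es : List (Entry X)} {e : Entry X} :
    IsWeakCoverSeq L (es ++ [e]) ↔ IsWeakCoverSeq L es ∧ e ∈ L ∧ MeetsNewLine es e := by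
  have get_left : ∀ (i : ℕ) (hi : i < es.length),
      (es ++ [e]).get ⟨i, by rw [List.length_append]; omega⟩ = es.get ⟨i, hi⟩ := by
    intro i hi
    simp [List.getElem_append_left hi]
  have get_last : (es ++ [e]).get ⟨es.length, by simp⟩ = e := by simp
  constructor
  · rintro ⟨hmem, hline⟩
    refine ⟨⟨fun f hf => hmem f (by simp [hf]), fun i => ?_⟩, hmem e (by simp), ?_⟩
    · obtain ⟨ℓ, hon, hfresh⟩ := hline ⟨i, by grind⟩
      rw [get_left i i.2] at hon
      exact ⟨ℓ, hon, fun j hj => by simpa [get_left j j.2] using hfresh ⟨j, by grind⟩ hj⟩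
    · obtain ⟨ℓ, hon, hfresh⟩ := hline ⟨es.length, by simp⟩
      rw [get_last] at hon
      refine ⟨ℓ, hon, fun f hf => ?_⟩
      obtain ⟨j, rfl⟩ := List.get_of_mem hf
      simpa [get_left j j.2] using hfresh ⟨j, by grind⟩ j.2
  · rintro ⟨⟨hmem, hline⟩, heL, ℓ, hon, hfresh⟩
    refine ⟨fun f hf => ?_, fun ⟨i, hi⟩ => ?_⟩
    · rcases List.mem_append.1 hf with hf | hf
      · exact hmem f hf
      · rwa [List.mem_singleton.1 hf]
    rcases Nat.lt_or_ge i es.length with hi' | hi'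
    · obtain ⟨ℓ', hon', hfresh'⟩ := hline ⟨i, hi'⟩
      refine ⟨ℓ', by rwa [get_left i hi'], fun ⟨j, hj⟩ hji => ?_⟩
      have hj' : j < es.length := by simp only at hji; omega
      rw [get_left j hj']
      exact hfresh' ⟨j, hj'⟩ hji
    · have hi_eq : i = es.length := by
        rw [List.length_append, List.length_singleton] at hi; omega
      subst hi_eq
      refine ⟨ℓ, by rwa [get_last], fun ⟨j, hj⟩ hji => ?_⟩
      rw [get_left j hji]
      exact hfresh _ (List.get_mem es ⟨j, hji⟩)

end WeakCoverSeq

section CoveredLines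

variable {X : Type*} [DecidableEq X]

def coveredRows (es : List (Entry X)) : Finset X := (es.map (·.1)).toFinset

def coveredCols (es : List (Entry X)) : Finset X := (es.map (·.2.1)).toFinset

def coveredSyms (es : List (Entry X)) : Finset X := (es.map (·.2.2)).toFinset

/-- The number of lines met by the entries of `es`. -/
def numCovered (es : List (Entry X)) : ℕ :=
  #(coveredRows es) + #(coveredCols es) + #(coveredSyms es)

@[simp] lemma mem_coveredRows {es : List (Entry X)} {x : X} :
    x ∈ coveredRows es ↔ ∃ e ∈ es, e.1 = x := by
  simp [coveredRows]

@[simp] lemma mem_coveredCols {es : List (Entry X)} {x : X} :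
    x ∈ coveredCols es ↔ ∃ e ∈ es, e.2.1 = x := by
  simp [coveredCols]

@[simp] lemma mem_coveredSyms {es : List (Entry X)} {x : X} :
    x ∈ coveredSyms es ↔ ∃ e ∈ es, e.2.2 = x := by
  simp [coveredSyms]

lemma coveredRows_append_singleton (es : List (Entry X)) (e : Entry X) :
    coveredRows (es ++ [e]) = insert e.1 (coveredRows es) := by
  simp [coveredRows, List.toFinset_append, Finset.union_comm]

lemma coveredCols_append_singleton (es : List (Entry X)) (e : Entry X) :
    coveredCols (es ++ [e]) = insert e.2.1 (coveredCols es) := by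
  simp [coveredCols, List.toFinset_append, Finset.union_comm]

lemma coveredSyms_append_singleton (es : List (Entry X)) (e : Entry X) :
    coveredSyms (es ++ [e]) = insert e.2.2 (coveredSyms es) := by
  simp [coveredSyms, List.toFinset_append, Finset.union_comm]

lemma numCovered_append_singleton (es : List (Entry X)) (e : Entry X) :
    numCovered (es ++ [e]) = #(insert e.1 (coveredRows es)) +
      #(insert e.2.1 (coveredCols es)) + #(insert e.2.2 (coveredSyms es)) := by
  rw [numCovered, coveredRows_append_singleton, coveredCols_append_singleton,
    coveredSyms_append_singleton]

lemma coveredRows_subset_append (es ts : List (Entry X)) :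
    coveredRows es ⊆ coveredRows (es ++ ts) :=
  fun x hx => by simp only [mem_coveredRows, List.mem_append] at hx ⊢; grind

lemma coveredCols_subset_append (es ts : List (Entry X)) :
    coveredCols es ⊆ coveredCols (es ++ ts) :=
  fun x hx => by simp only [mem_coveredCols, List.mem_append] at hx ⊢; grind

lemma coveredSyms_subset_append (es ts : List (Entry X)) :
    coveredSyms es ⊆ coveredSyms (es ++ ts) :=
  fun x hx => by simp only [mem_coveredSyms, List.mem_append] at hx ⊢; grind

lemma numCovered_le [Fintype X] (es : List (Entry X)) : numCovered es ≤ 3 * Fintype.card X := by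
  have := (coveredRows es).card_le_univ
  have := (coveredCols es).card_le_univ
  have := (coveredSyms es).card_le_univ
  rw [numCovered]
  omega

lemma meetsNewLine_iff {es : List (Entry X)} {e : Entry X} :
    MeetsNewLine es e ↔
      e.1 ∉ coveredRows es ∨ e.2.1 ∉ coveredCols es ∨ e.2.2 ∉ coveredSyms es := by
  rw [MeetsNewLine]
  simp only [mem_coveredRows, mem_coveredCols, mem_coveredSyms, not_exists, not_and]
  constructor
  · rintro ⟨⟨t, x⟩, he, hfresh⟩
    fin_cases t <;> simp only [Fin.zero_eta, Fin.mk_one, Fin.reduceFinMk, onLine_row, onLine_col,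
      onLine_sym] at he hfresh <;> subst he
    · exact Or.inl hfresh
    · exact Or.inr (Or.inl hfresh)
    · exact Or.inr (Or.inr hfresh)
  · rintro (h | h | h)
    · exact ⟨(0, e.1), by simp, fun f hf => by simpa using h f hf⟩
    · exact ⟨(1, e.2.1), by simp, fun f hf => by simpa using h f hf⟩
    · exact ⟨(2, e.2.2), by simp, fun f hf => by simpa using h f hf⟩

lemma exists_onLine_of_covered_eq_univ [Fintype X] {es : List (Entry X)}
    (hR : coveredRows es = univ) (hC : coveredCols es = univ) (hS : coveredSyms es = univ) :
    ∀ ℓ : Line X, ∃ e ∈ es, onLine e ℓ := by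
  rintro ⟨t, x⟩
  fin_cases t <;> simp only [Fin.zero_eta, Fin.mk_one, Fin.reduceFinMk]
  · simpa only [onLine_row] using mem_coveredRows.1 (hR ▸ mem_univ x)
  · simpa only [onLine_col] using mem_coveredCols.1 (hC ▸ mem_univ x)
  · simpa only [onLine_sym] using mem_coveredSyms.1 (hS ▸ mem_univ x)

end CoveredLines

section UpperBound

variable {X : Type*} {L : Finset (Entry X)}

lemma IsLatin.eq_of_two_coords_eq (hL : IsLatin L) {e f : Entry X} (he : e ∈ L) (hf : f ∈ L)
    (h : (e.1 = f.1 ∧ e.2.1 = f.2.1) ∨ (e.1 = f.1 ∧ e.2.2 = f.2.2) ∨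
      (e.2.1 = f.2.1 ∧ e.2.2 = f.2.2)) : e = f := by
  obtain ⟨r, c, s⟩ := e
  obtain ⟨r', c', s'⟩ := f
  rcases h with ⟨rfl, rfl⟩ | ⟨rfl, rfl⟩ | ⟨rfl, rfl⟩
  · rw [(hL.1 r c).unique he hf]
  · rw [(hL.2.1 r s).unique he hf]
  · rw [(hL.2.2 c s).unique he hf]

variable [DecidableEq X]

lemma IsLatin.five_le_numCovered_pair (hL : IsLatin L) {e f : Entry X} (he : e ∈ L)
    (hf : f ∈ L) (hne : e ≠ f) : 5 ≤ numCovered [e, f] := by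
  have hpair : ∀ a b : X, #({a, b} : Finset X) = if a = b then 1 else 2 := fun a b => by
    split_ifs with h <;> simp [h]
  have hcov : numCovered [e, f] = #{e.1, f.1} + #{e.2.1, f.2.1} + #{e.2.2, f.2.2} := by
    simp [numCovered, coveredRows, coveredCols, coveredSyms]
  rw [hcov, hpair, hpair, hpair]
  have := hL.eq_of_two_coords_eq he hf
  split_ifs <;> simp_all

lemma numCovered_lt_of_meetsNewLine {es : List (Entry X)} {e : Entry X}
    (h : MeetsNewLine es e) : numCovered es < numCovered (es ++ [e]) := by
  rw [meetsNewLine_iff] at h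
  rw [numCovered_append_singleton, numCovered]
  have := card_le_card (subset_insert e.1 (coveredRows es))
  have := card_le_card (subset_insert e.2.1 (coveredCols es))
  have := card_le_card (subset_insert e.2.2 (coveredSyms es))
  rcases h with h | h | h <;> have := card_insert_of_notMem h <;> omega

lemma IsLatin.length_add_three_le_numCovered (hL : IsLatin L) {es : List (Entry X)}
    (hes : IsWeakCoverSeq L es) (hlen : 2 ≤ es.length) : es.length + 3 ≤ numCovered es := by
  induction es using List.reverseRecOn with
  | nil => simp at hlen
  | append_singleton xs e ih =>
    obtain ⟨hxs, heL, hfresh⟩ := isWeakCoverSeq_append_singleton.1 hes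
    have hstep := numCovered_lt_of_meetsNewLine hfresh
    rw [List.length_append, List.length_singleton] at hlen ⊢
    rcases Nat.lt_or_ge xs.length 2 with hxs2 | hxs2
    · obtain ⟨e₀, rfl⟩ := List.length_eq_one_iff.1 (by omega : xs.length = 1)
      have hne : e ≠ e₀ := by rintro rfl; simp [meetsNewLine_iff] at hfresh
      have := hL.five_le_numCovered_pair (hxs.1 e₀ (by simp)) heL hne.symm
      simp_all
    · have := ih hxs hxs2
      omega

theorem IsLatin.length_add_three_le [Fintype X] (hL : IsLatin L) (hX : 2 ≤ Fintype.card X)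
    {es : List (Entry X)} (hes : IsWeakCoverSeq L es) : es.length + 3 ≤ 3 * Fintype.card X := by
  rcases Nat.lt_or_ge es.length 2 with hlen | hlen
  · omega
  · exact (hL.length_add_three_le_numCovered hes hlen).trans (numCovered_le es)

end UpperBound

section LowerBound

variable {X : Type*} [DecidableEq X] {L : Finset (Entry X)}

/-- The greedy extension is stuck: no entry of `L` has exactly one line not met by `es`. -/
def IsStuck (L : Finset (Entry X)) (es : List (Entry X)) : Prop :=
  ∀ e ∈ L,
    (e.2.1 ∈ coveredCols es → e.2.2 ∈ coveredSyms es → e.1 ∈ coveredRows es) ∧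
    (e.1 ∈ coveredRows es → e.2.2 ∈ coveredSyms es → e.2.1 ∈ coveredCols es) ∧
    (e.1 ∈ coveredRows es → e.2.1 ∈ coveredCols es → e.2.2 ∈ coveredSyms es)

lemma exists_numCovered_append_singleton_eq_succ {es : List (Entry X)} (hs : ¬ IsStuck L es) :
    ∃ e ∈ L, MeetsNewLine es e ∧ numCovered (es ++ [e]) = numCovered es + 1 := by
  simp only [IsStuck, not_forall, not_and_or] at hs
  obtain ⟨e, heL, ⟨hc, hs, hr⟩ | ⟨hr, hs, hc⟩ | ⟨hr, hc, hs⟩⟩ := hs <;>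
  · refine ⟨e, heL, meetsNewLine_iff.2 (by tauto), ?_⟩
    rw [numCovered_append_singleton, numCovered]
    simp only [card_insert_eq_ite, *, if_true, if_false]
    omega

lemma exists_isStuck_extension [Fintype X] {es : List (Entry X)} (hes : IsWeakCoverSeq L es) :
    ∃ ts, IsWeakCoverSeq L (es ++ ts) ∧ IsStuck L (es ++ ts) ∧
      numCovered (es ++ ts) = numCovered es + ts.length := by
  by_cases hs : IsStuck L es
  · exact ⟨[], by simpa using hes, by simpa using hs, by simp⟩
  obtain ⟨e, heL, hfresh, hcov⟩ := exists_numCovered_append_singleton_eq_succ hs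
  have : 3 * Fintype.card X - numCovered (es ++ [e]) < 3 * Fintype.card X - numCovered es := by
    have := numCovered_le (es ++ [e])
    omega
  obtain ⟨ts, hweak, hstuck, hcov'⟩ :=
    exists_isStuck_extension (isWeakCoverSeq_append_singleton.2 ⟨hes, heL, hfresh⟩)
  refine ⟨e :: ts, by simpa using hweak, by simpa using hstuck, ?_⟩
  simp only [List.append_assoc, List.singleton_append] at hcov'
  simp only [hcov', hcov, List.length_cons]
  omega
termination_by 3 * Fintype.card X - numCovered es

lemma IsLatin.card_coveredCols_le (hL : IsLatin L) {es : List (Entry X)} (hs : IsStuck L es)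
    {r : X} (hr : r ∈ coveredRows es) : #(coveredCols es) ≤ #(coveredSyms es) :=
  card_le_card_of_forall_subsingleton (fun c s => (r, c, s) ∈ L)
    (fun c hc => (hL.1 r c).exists.imp fun _ he => ⟨(hs _ he).2.2 hr hc, he⟩)
    (fun s _ _ h₁ _ h₂ => (hL.2.1 r s).unique h₁.2 h₂.2)

lemma IsLatin.card_coveredSyms_le (hL : IsLatin L) {es : List (Entry X)} (hs : IsStuck L es)
    {c : X} (hc : c ∈ coveredCols es) : #(coveredSyms es) ≤ #(coveredRows es) :=
  card_le_card_of_forall_subsingleton (fun s r => (r, c, s) ∈ L)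
    (fun s hs' => (hL.2.2 c s).exists.imp fun _ he => ⟨(hs _ he).1 hc hs', he⟩)
    (fun r _ _ h₁ _ h₂ => (hL.1 r c).unique h₁.2 h₂.2)

lemma IsLatin.card_coveredRows_le (hL : IsLatin L) {es : List (Entry X)} (hs : IsStuck L es)
    {s : X} (hs' : s ∈ coveredSyms es) : #(coveredRows es) ≤ #(coveredCols es) :=
  card_le_card_of_forall_subsingleton (fun r c => (r, c, s) ∈ L)
    (fun r hr => (hL.2.1 r s).exists.imp fun _ he => ⟨(hs _ he).2.1 hr hs', he⟩)
    (fun c _ _ h₁ _ h₂ => (hL.2.2 c s).unique h₁.2 h₂.2)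

lemma IsLatin.card_coveredRows_eq (hL : IsLatin L) {es : List (Entry X)} (hs : IsStuck L es)
    {r c s : X} (hr : r ∈ coveredRows es) (hc : c ∈ coveredCols es)
    (hs' : s ∈ coveredSyms es) :
    #(coveredRows es) = #(coveredCols es) ∧ #(coveredCols es) = #(coveredSyms es) := by
  have := hL.card_coveredCols_le hs hr
  have := hL.card_coveredSyms_le hs hc
  have := hL.card_coveredRows_le hs hs'
  omega

lemma IsLatin.exists_doubling_extension [Fintype X] (hL : IsLatin L) {es : List (Entry X)}
    (hes : IsWeakCoverSeq L es) (hs : IsStuck L es) {r c : X} (hr : r ∉ coveredRows es)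
    (hc : c ∈ coveredCols es) :
    ∃ ts, IsWeakCoverSeq L (es ++ ts) ∧ IsStuck L (es ++ ts) ∧
      numCovered (es ++ ts) = numCovered es + ts.length + 1 ∧ r ∈ coveredRows (es ++ ts) ∧
      #(coveredSyms es) + #(coveredCols es) ≤ #(coveredSyms (es ++ ts)) := by
  obtain ⟨s, hrcs, -⟩ := hL.1 r c
  have hsym : s ∉ coveredSyms es := fun h => hr ((hs _ hrcs).1 hc h)
  obtain ⟨ts, hweak, hstuck, hcov⟩ :=
    exists_isStuck_extension <|
      isWeakCoverSeq_append_singleton.2 ⟨hes, hrcs, meetsNewLine_iff.2 (Or.inl hr)⟩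
  have hcov₁ : numCovered (es ++ [(r, c, s)]) = numCovered es + 2 := by
    rw [numCovered_append_singleton, numCovered, card_insert_of_notMem hr,
      insert_eq_of_mem hc, card_insert_of_notMem hsym]
    omega
  simp only [List.append_assoc, List.singleton_append] at hweak hstuck hcov
  have hr₂ : r ∈ coveredRows (es ++ (r, c, s) :: ts) :=
    mem_coveredRows.2 ⟨(r, c, s), by simp, rfl⟩
  refine ⟨(r, c, s) :: ts, hweak, hstuck, by simp only [hcov, hcov₁, List.length_cons]; omega,
    hr₂, ?_⟩
  -- The symbols in row `r` over the columns already covered are all new.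
  have hnew : #(coveredCols es) ≤ #(coveredSyms (es ++ (r, c, s) :: ts) \ coveredSyms es) :=
    card_le_card_of_forall_subsingleton (fun c s => (r, c, s) ∈ L)
      (fun c' hc' => by
        obtain ⟨s', hs', -⟩ := hL.1 r c'
        have hnew : s' ∉ coveredSyms es := fun h => hr ((hs _ hs').1 hc' h)
        have hc₂ := coveredCols_subset_append es ((r, c, s) :: ts) hc'
        exact ⟨s', mem_sdiff.2 ⟨(hstuck _ hs').2.2 hr₂ hc₂, hnew⟩, hs'⟩)
      (fun s _ _ h₁ _ h₂ => (hL.2.1 r s).unique h₁.2 h₂.2)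
  rw [card_sdiff_of_subset (coveredSyms_subset_append _ _)] at hnew
  have := card_le_card (coveredSyms_subset_append es ((r, c, s) :: ts))
  omega

lemma IsLatin.isCoverSeq_of_coveredRows_eq_univ [Fintype X] (hL : IsLatin L)
    {es : List (Entry X)} (hes : IsWeakCoverSeq L es) (hs : IsStuck L es)
    (hR : coveredRows es = univ) {c s : X}
    (hc : c ∈ coveredCols es) (hs' : s ∈ coveredSyms es) :
    IsCoverSeq L es ∧ numCovered es = 3 * Fintype.card X := by
  have hr : c ∈ coveredRows es := hR ▸ mem_univ c
  obtain ⟨hRC, hCS⟩ := hL.card_coveredRows_eq hs hr hc hs'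
  rw [hR, card_univ] at hRC
  have hC := (coveredCols es).eq_univ_of_card hRC.symm
  have hS := (coveredSyms es).eq_univ_of_card (hCS ▸ hRC).symm
  refine ⟨⟨hes, exists_onLine_of_covered_eq_univ hR hC hS⟩, ?_⟩
  rw [numCovered, hR, hC, hS, card_univ]
  ring

/-- `j` counts the doubling steps so far: each costs one extra line and doubles the number of
covered rows. -/
lemma IsLatin.exists_isCoverSeq_of_isStuck [Fintype X] (hL : IsLatin L) (j : ℕ)
    {es : List (Entry X)} (hes : IsWeakCoverSeq L es) (hs : IsStuck L es) {r c s : X}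
    (hr : r ∈ coveredRows es)
    (hc : c ∈ coveredCols es) (hs' : s ∈ coveredSyms es) (hpow : 2 ^ j ≤ #(coveredRows es))
    (hcov : numCovered es ≤ es.length + 2 + j) :
    ∃ es', IsCoverSeq L es' ∧
      3 * Fintype.card X ≤ es'.length + 2 + Nat.log 2 (Fintype.card X) := by
  obtain ⟨hRC, hCS⟩ := hL.card_coveredRows_eq hs hr hc hs'
  by_cases hR : coveredRows es = univ
  · obtain ⟨hcover, hnum⟩ := hL.isCoverSeq_of_coveredRows_eq_univ hes hs hR hc hs'
    have : j ≤ Nat.log 2 (Fintype.card X) :=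
      Nat.le_log_of_pow_le one_lt_two (hpow.trans (card_le_univ _))
    exact ⟨es, hcover, by omega⟩
  obtain ⟨r', hr'⟩ : ∃ r', r' ∉ coveredRows es := by simpa [eq_univ_iff_forall] using hR
  obtain ⟨ts, hweak, hstuck, hcov', hr₂, hdouble⟩ :=
    hL.exists_doubling_extension hes hs hr' hc
  have hc₂ := coveredCols_subset_append es ts hc
  have hs₂ := coveredSyms_subset_append es ts hs'
  obtain ⟨hRC₂, hCS₂⟩ := hL.card_coveredRows_eq hstuck hr₂ hc₂ hs₂
  have : 0 < #(coveredRows es) := card_pos.2 ⟨r, hr⟩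
  have : #(coveredRows es) < Fintype.card X := card_lt_univ_of_notMem hr'
  have : #(coveredRows (es ++ ts)) ≤ Fintype.card X := card_le_univ _
  exact hL.exists_isCoverSeq_of_isStuck (j + 1) hweak hstuck hr₂ hc₂ hs₂
    (by rw [pow_succ]; omega) (by rw [List.length_append]; omega)
termination_by Fintype.card X - #(coveredRows es)
decreasing_by omega

theorem IsLatin.exists_isCoverSeq_length_ge [Fintype X] [Nonempty X] (hL : IsLatin L) :
    ∃ es, IsCoverSeq L es ∧
      3 * Fintype.card X ≤ es.length + 2 + Nat.log 2 (Fintype.card X) := by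
  obtain ⟨x⟩ := ‹Nonempty X›
  obtain ⟨s, he, -⟩ := hL.1 x x
  have hweak : IsWeakCoverSeq L [(x, x, s)] :=
    isWeakCoverSeq_append_singleton.2 ⟨isWeakCoverSeq_nil, he, by simp [meetsNewLine_iff]⟩
  obtain ⟨ts, hweak', hstuck, hcov⟩ := exists_isStuck_extension hweak
  have hmem : (x, x, s) ∈ [(x, x, s)] ++ ts := by simp
  have hr := mem_coveredRows.2 ⟨_, hmem, rfl⟩
  refine hL.exists_isCoverSeq_of_isStuck 0 hweak' hstuck hr (mem_coveredCols.2 ⟨_, hmem, rfl⟩)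
    (mem_coveredSyms.2 ⟨_, hmem, rfl⟩) (card_pos.2 ⟨_, hr⟩) ?_
  have : numCovered [(x, x, s)] = 3 := by
    simp [numCovered, coveredRows, coveredCols, coveredSyms]
  simp only [hcov, this, List.length_append, List.length_singleton]
  omega

end LowerBound

theorem stmt11 {n : ℕ} (hn : 2 ≤ n) (L : Finset (Entry (Fin n))) (hL : IsLatin L) :
    3 * (n : ℤ) - 2 - Nat.log 2 n ≤ (mcs L : ℤ) ∧ (mcs L : ℤ) ≤ 3 * (n : ℤ) - 3 := by
  have : Nonempty (Fin n) := ⟨⟨0, by omega⟩⟩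
  have hupper : ∀ d ∈ {d | ∃ es, IsCoverSeq L es ∧ es.length = d}, d + 3 ≤ 3 * n := by
    rintro _ ⟨es, hes, rfl⟩
    simpa using hL.length_add_three_le (by simpa using hn) hes.1
  have hbdd : BddAbove {d | ∃ es, IsCoverSeq L es ∧ es.length = d} :=
    ⟨3 * n, fun d hd => by have := hupper d hd; omega⟩
  obtain ⟨es, hes, hlen⟩ := hL.exists_isCoverSeq_length_ge
  have hle : es.length ≤ mcs L := le_csSup hbdd ⟨es, hes, rfl⟩
  have hmax : mcs L + 3 ≤ 3 * n := hupper _ (Nat.sSup_mem ⟨_, es, hes, rfl⟩ hbdd)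
  rw [Fintype.card_fin] at hlen
  omega
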